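/- arXiv:1712.02331 — 5 statements merged into one kernel-verified Lean document; each statement's English description precedes it below -/
import Mathlib

section
/- Let g be a Lie algebra over a field of characteristic zero with Lie subalgebras g₁ and g₂ satisfying [g₁, g₂] ⊆ g₂ and [g₂, g₂] = 0. Then for X ∈ g₁ and Y ∈ g₂ (in a setting where the relevant exponentials converge, e.g., X and Y act as locally finite or formally nilpotent operators, or in a formal-parameter completion), exp(X + Y) = exp(X) · exp(Σ_{n≥1} ((−1)^{n−1}/n!) ad_X^{n−1}(Y)). -/
/-- Formal exponential of a power series over a (possibly noncommutative) ℚ-algebra,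
valid when the constant term vanishes (and for series of the form `tX`),
defined coefficientwise: the coefficient of `t^m` in `exp f` is `∑_{k ≤ m} coeff_m(f^k)/k!`. -/
noncomputable def pexpN {A : Type*} [Ring A] [Algebra ℚ A] (f : PowerSeries A) :
    PowerSeries A :=
  PowerSeries.mk fun m => ∑ k ∈ Finset.range (m + 1),
    (k.factorial : ℚ)⁻¹ • PowerSeries.coeff m (f ^ k)

attribute [local instance 100] LieRing.ofAssociativeRing

/-!
Both sides solve the linear equation `F' = (x + y) F`, `F(0) = 1`, whose formal solution is
unique. Put `E = exp(tx)` and let `G` be the exponent of the second factor. Then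
`G' = e^{-t ad x} y`, and `E G' = y E` is the binomial theorem for the commuting operators
`L_x` and `-ad x = R_x - L_x`. The coefficients of `G` lie in the abelian `g₂`, so `G` commutes
with `G'` and `(exp G)' = G' exp G`. Hence `(E exp G)' = x E exp G + E G' exp G = (x + y) E exp G`.
-/

open PowerSeries Finset

namespace PowerSeries

section Semiring

variable {R : Type*} [Semiring R]

noncomputable def formalDeriv : R⟦X⟧ →+ R⟦X⟧ where
  toFun f := mk fun n => (n + 1) • coeff (n + 1) f
  map_zero' := by ext; simp
  map_add' f g := by ext; simp

@[simp]
theorem coeff_formalDeriv (f : R⟦X⟧) (n : ℕ) :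
    coeff n (formalDeriv f) = (n + 1) • coeff (n + 1) f := by
  simp [formalDeriv]

@[simp]
theorem formalDeriv_C (a : R) : formalDeriv (C a) = 0 := by
  ext n
  simp

theorem formalDeriv_mul (f g : R⟦X⟧) :
    formalDeriv (f * g) = formalDeriv f * g + f * formalDeriv g := by
  ext n
  have split : ∀ p ∈ antidiagonal (n + 1), (n + 1) • (coeff p.1 f * coeff p.2 g) =
      p.1 • (coeff p.1 f * coeff p.2 g) + p.2 • (coeff p.1 f * coeff p.2 g) := by
    intro p hp
    rw [← add_nsmul, mem_antidiagonal.1 hp]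
  simp only [coeff_formalDeriv, map_add, coeff_mul, smul_sum, sum_congr rfl split,
    sum_add_distrib]
  rw [Nat.sum_antidiagonal_succ, Nat.sum_antidiagonal_succ']
  simp only [zero_smul, zero_add, smul_mul_assoc, mul_smul_comm]

theorem formalDeriv_pow_succ {f : R⟦X⟧} (h : Commute f (formalDeriv f)) (k : ℕ) :
    formalDeriv (f ^ (k + 1)) = (k + 1) • (formalDeriv f * f ^ k) := by
  induction k with
  | zero => simp
  | succ k ih =>
    rw [pow_succ', formalDeriv_mul, ih, mul_smul_comm, ← mul_assoc, h.eq, mul_assoc, ← pow_succ',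
      succ_nsmul' _ (k + 1)]

theorem eq_of_formalDeriv_eq_mul_left [IsAddTorsionFree R] {u F G : R⟦X⟧}
    (hF : formalDeriv F = u * F) (hG : formalDeriv G = u * G)
    (h0 : constantCoeff F = constantCoeff G) : F = G := by
  ext n
  induction n using Nat.strong_induction_on with
  | _ n ih =>
    cases n with
    | zero => simpa using h0
    | succ n =>
      refine nsmul_right_injective n.succ_ne_zero ?_
      simp only [← coeff_formalDeriv, hF, hG, coeff_mul]
      exact sum_congr rfl fun p hp => by rw [ih p.2 (by have := mem_antidiagonal.1 hp; omega)]

theorem commute_of_forall_commute_coeff {f g : R⟦X⟧}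
    (h : ∀ i j, Commute (coeff i f) (coeff j g)) : Commute f g := by
  ext n
  rw [coeff_mul, coeff_mul, ← Nat.sum_antidiagonal_swap]
  exact sum_congr rfl fun p _ => (h p.2 p.1).eq

end Semiring

section RatAlgebra

variable {A : Type*} [Ring A] [Algebra ℚ A]

theorem succ_nsmul_inv_factorial_succ_smul {V : Type*} [AddCommGroup V] [Module ℚ V] (n : ℕ)
    (v : V) : (n + 1) • (((n + 1).factorial : ℚ)⁻¹ • v) = (n.factorial : ℚ)⁻¹ • v := by
  rw [← Nat.cast_smul_eq_nsmul ℚ, smul_smul, Nat.factorial_succ]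
  congr 1
  push_cast
  field_simp

theorem formalDeriv_rat_smul (q : ℚ) (f : A⟦X⟧) : formalDeriv (q • f) = q • formalDeriv f := by
  ext n
  simp

noncomputable def expPartialSum (f : A⟦X⟧) (N : ℕ) : A⟦X⟧ :=
  ∑ k ∈ range N, (k.factorial : ℚ)⁻¹ • f ^ k

theorem coeff_pexpN (f : A⟦X⟧) (m : ℕ) :
    coeff m (pexpN f) = coeff m (expPartialSum f (m + 1)) := by
  simp [pexpN, expPartialSum, map_sum]

theorem constantCoeff_pexpN (f : A⟦X⟧) : constantCoeff (pexpN f) = 1 := by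
  simp [← coeff_zero_eq_constantCoeff_apply, coeff_pexpN, expPartialSum]

theorem coeff_pexpN_eq_coeff_expPartialSum {f : A⟦X⟧} (hf : constantCoeff f = 0) {m N : ℕ}
    (h : m < N) : coeff m (pexpN f) = coeff m (expPartialSum f N) := by
  rw [coeff_pexpN, expPartialSum, expPartialSum, map_sum, map_sum]
  refine sum_subset (range_subset_range.2 h) fun k _ hk => ?_
  rw [coeff_smul, coeff_of_lt_order, smul_zero]
  refine lt_of_lt_of_le ?_ (le_order_pow_of_constantCoeff_eq_zero k hf)
  exact_mod_cast (by simpa using hk : m < k)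

theorem formalDeriv_expPartialSum_succ {f : A⟦X⟧} (h : Commute f (formalDeriv f)) (N : ℕ) :
    formalDeriv (expPartialSum f (N + 1)) = formalDeriv f * expPartialSum f N := by
  rw [expPartialSum, sum_range_succ', map_add, map_sum, expPartialSum, mul_sum]
  simp only [formalDeriv_rat_smul, formalDeriv_pow_succ h, pow_zero, ← map_one C, formalDeriv_C,
    smul_zero, add_zero]
  refine sum_congr rfl fun k _ => ?_
  rw [smul_comm, succ_nsmul_inv_factorial_succ_smul, mul_smul_comm]

theorem formalDeriv_pexpN {f : A⟦X⟧} (hf : constantCoeff f = 0) (h : Commute f (formalDeriv f)) :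
    formalDeriv (pexpN f) = formalDeriv f * pexpN f := by
  ext n
  rw [coeff_formalDeriv, coeff_pexpN_eq_coeff_expPartialSum hf (Nat.lt_succ_self _),
    ← coeff_formalDeriv, formalDeriv_expPartialSum_succ h, coeff_mul, coeff_mul]
  refine sum_congr rfl fun p hp => ?_
  rw [coeff_pexpN_eq_coeff_expPartialSum (N := n + 1) hf
    (by have := mem_antidiagonal.1 hp; omega)]

theorem coeff_pexpN_X_mul_C (a : A) (m : ℕ) :
    coeff m (pexpN (X * C a)) = (m.factorial : ℚ)⁻¹ • a ^ m := by
  rw [coeff_pexpN, expPartialSum, map_sum, sum_eq_single_of_mem m (self_mem_range_succ m)]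
  · simp [(commute_X (C a)).symm.mul_pow, ← map_pow]
  · intro k hk hkm
    rw [(commute_X (C a)).symm.mul_pow, ← map_pow, coeff_smul, coeff_X_pow_mul', coeff_C]
    have := mem_range.1 hk
    rw [if_pos (by omega), if_neg (by omega), smul_zero]

theorem formalDeriv_pexpN_X_mul_C (a : A) :
    formalDeriv (pexpN (X * C a)) = C a * pexpN (X * C a) := by
  have hD : formalDeriv (X * C a) = C a := by
    ext n
    cases n <;> simp [coeff_X]
  have hcomm : Commute (X * C a) (formalDeriv (X * C a)) := by
    rw [hD]
    exact (commute_X _).symm.mul_left (Commute.refl _)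
  rw [formalDeriv_pexpN (by simp) hcomm, hD]

end RatAlgebra

end PowerSeries

theorem sum_antidiagonal_zsmul_pow_mul_iterate_ad {A : Type*} [Ring A] (x y : A) (n : ℕ) :
    ∑ p ∈ antidiagonal n, ((-1) ^ p.2 * n.choose p.1 : ℤ) •
      (x ^ p.1 * (fun v => x * v - v * x)^[p.2] y) = y * x ^ n := by
  set L := LinearMap.mulLeft ℤ x
  set R := LinearMap.mulRight ℤ x
  have hT : ∀ j, ⇑((L - R) ^ j) = (fun v => x * v - v * x)^[j] := fun j => by
    rw [Module.End.coe_pow]; rfl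
  have hcomm : Commute L ((-1 : ℤ) • (L - R)) :=
    ((Commute.refl L).sub_right (LinearMap.commute_mulLeft_right x x)).smul_right _
  have hR : L + (-1 : ℤ) • (L - R) = R := by abel
  have hbinom := congr($(hcomm.add_pow' n) y)
  rw [hR, LinearMap.pow_mulRight, LinearMap.mulRight_apply] at hbinom
  rw [hbinom, LinearMap.sum_apply]
  refine sum_congr rfl fun p _ => ?_
  rw [smul_pow, LinearMap.pow_mulLeft, mul_smul, natCast_zsmul, LinearMap.smul_apply,
    Module.End.mul_apply, LinearMap.smul_apply, LinearMap.mulLeft_apply, hT, mul_smul_comm,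
    smul_comm]

section AdExpIntegral

variable {A : Type*} [Ring A] [Algebra ℚ A]

/-- The series `∫₀ᵗ e^{-s ad x} y ds`. -/
noncomputable def adExpIntegral (x y : A) : A⟦X⟧ :=
  mk fun n => if n = 0 then 0 else
    ((-1 : ℚ) ^ (n - 1) * (n.factorial : ℚ)⁻¹) • ((fun v => x * v - v * x)^[n - 1] y)

theorem constantCoeff_adExpIntegral (x y : A) : constantCoeff (adExpIntegral x y) = 0 := by
  simp [adExpIntegral, ← coeff_zero_eq_constantCoeff_apply]

theorem coeff_formalDeriv_adExpIntegral (x y : A) (n : ℕ) :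
    coeff n (formalDeriv (adExpIntegral x y)) =
      ((-1 : ℚ) ^ n * (n.factorial : ℚ)⁻¹) • (fun v => x * v - v * x)^[n] y := by
  simp only [coeff_formalDeriv, adExpIntegral, coeff_mk, Nat.add_one_ne_zero, if_false,
    Nat.add_sub_cancel, mul_smul, smul_comm _ ((-1 : ℚ) ^ n), succ_nsmul_inv_factorial_succ_smul]

theorem pexpN_X_mul_C_mul_formalDeriv_adExpIntegral (x y : A) :
    pexpN (X * C x) * formalDeriv (adExpIntegral x y) = C y * pexpN (X * C x) := by
  ext n
  rw [coeff_mul, coeff_C_mul, coeff_pexpN_X_mul_C, mul_smul_comm,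
    ← sum_antidiagonal_zsmul_pow_mul_iterate_ad x y n, smul_sum]
  refine sum_congr rfl fun p hp => ?_
  rw [coeff_pexpN_X_mul_C, coeff_formalDeriv_adExpIntegral, smul_mul_smul_comm,
    ← Int.cast_smul_eq_zsmul ℚ, smul_smul]
  congr 1
  obtain ⟨i, j⟩ := p
  obtain rfl : i + j = n := mem_antidiagonal.1 hp
  have hchoose : ((i + j).choose j : ℚ) ≠ 0 :=
    Nat.cast_ne_zero.2 (Nat.choose_pos (Nat.le_add_left j i)).ne'
  rw [Nat.choose_symm_add, ← Nat.add_choose_mul_factorial_mul_factorial i j]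
  push_cast
  field_simp

theorem commute_adExpIntegral_formalDeriv {x y : A}
    (h : ∀ i j, Commute ((fun v => x * v - v * x)^[i] y) ((fun v => x * v - v * x)^[j] y)) :
    Commute (adExpIntegral x y) (formalDeriv (adExpIntegral x y)) := by
  refine commute_of_forall_commute_coeff fun i j => ?_
  rw [coeff_formalDeriv_adExpIntegral]
  cases i with
  | zero => simp [adExpIntegral]
  | succ i =>
    simp only [adExpIntegral, coeff_mk, Nat.add_one_ne_zero, if_false, Nat.add_sub_cancel]
    exact ((h i j).smul_left (_ : ℚ)).smul_right (_ : ℚ)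

end AdExpIntegral

theorem LieSubalgebra.iterate_ad_mem {A : Type*} [Ring A] [Algebra ℚ A]
    {g₁ g₂ : LieSubalgebra ℚ A}
    (h12 : ∀ x ∈ g₁, ∀ y ∈ g₂, ⁅x, y⁆ ∈ g₂) {x y : A} (hx : x ∈ g₁) (hy : y ∈ g₂) (n : ℕ) :
    (fun v => x * v - v * x)^[n] y ∈ g₂ := by
  induction n with
  | zero => exact hy
  | succ n ih => rw [Function.iterate_succ_apply']; exact h12 x hx _ ih

/-- Zassenhaus-type decomposition: let `A` be an associative ℚ-algebra, viewed as a
Lie algebra via the commutator bracket, and let `g₁, g₂` be Lie subalgebras with `[g₁,g₂] ⊆ g₂`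
and `[g₂,g₂] = 0`. Then for `x ∈ g₁` and `y ∈ g₂`, in the formal power series ring `A[[t]]`,
`exp(t(x+y)) = exp(tx) · exp(∑_{n≥1} ((−1)^{n−1} t^n / n!) ad_x^{n−1}(y))`. -/
theorem stmt3 {A : Type*} [Ring A] [Algebra ℚ A]
    (g₁ g₂ : LieSubalgebra ℚ A)
    (h12 : ∀ x ∈ g₁, ∀ y ∈ g₂, ⁅x, y⁆ ∈ g₂)
    (h22 : ∀ y ∈ g₂, ∀ y' ∈ g₂, ⁅y, y'⁆ = (0 : A))
    (x y : A) (hx : x ∈ g₁) (hy : y ∈ g₂) :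
    pexpN (PowerSeries.X * PowerSeries.C (x + y)) =
      pexpN (PowerSeries.X * PowerSeries.C x) *
        pexpN (PowerSeries.mk fun n => if n = 0 then 0 else
          ((-1 : ℚ) ^ (n - 1) * (n.factorial : ℚ)⁻¹) •
            ((fun v => x * v - v * x)^[n - 1] y)) := by
  change _ = _ * pexpN (adExpIntegral x y)
  have := IsAddTorsionFree.of_module_rat A
  have hcomm := commute_adExpIntegral_formalDeriv fun i j => commute_iff_lie_eq.2 <|
    h22 _ (LieSubalgebra.iterate_ad_mem h12 hx hy i) _ (LieSubalgebra.iterate_ad_mem h12 hx hy j)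
  refine eq_of_formalDeriv_eq_mul_left (formalDeriv_pexpN_X_mul_C (x + y)) ?_
    (by simp only [map_mul, constantCoeff_pexpN, one_mul])
  rw [formalDeriv_mul, formalDeriv_pexpN_X_mul_C,
    formalDeriv_pexpN (constantCoeff_adExpIntegral x y) hcomm, ← mul_assoc,
    pexpN_X_mul_C_mul_formalDeriv_adExpIntegral, map_add, add_mul, mul_assoc, mul_assoc]
end

section
/- With notation as before, define for m ≥ 1 the second-order operators Y_m = Σ_{a+b=m, a,b ≥ 1} Σ_{μ,ν} a b η^{μν} ∂²/(∂q_a^μ ∂q_b^ν). Then for all m, n ≥ 1: [X_m, Y_n] + [Y_m, X_n] = (m−n) Y_{m+n}, where X_m = Σ_{k>0} Σ_α (k+m) q_k^α ∂/∂q_{k+m}^α. -/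
/-- `X_m = ∑_{k>0} ∑_α (k+m) q_k^α ∂/∂q_{k+m}^α` as a linear endomorphism of
`ℚ[q_k^α : k ≥ 1, 0 ≤ α ≤ N]` (obtained from the derivation with
`X_m(q_j^α) = j · q_{j−m}^α` for `j − m ≥ 1`, `0` otherwise). -/
noncomputable def XL (N m : ℕ) : Module.End ℚ (MvPolynomial (ℕ × Fin (N + 1)) ℚ) :=
  (MvPolynomial.mkDerivation ℚ fun v : ℕ × Fin (N + 1) =>
    if m < v.1 then (v.1 : ℚ) • MvPolynomial.X (v.1 - m, v.2) else 0).toLinearMap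

/-- The second-order operator
`Y_m = ∑_{a+b=m, a,b≥1} ∑_{μ,ν} a b η^{μν} ∂²/(∂q_a^μ ∂q_b^ν)`. -/
noncomputable def Yop (N : ℕ) (η : Fin (N + 1) → Fin (N + 1) → ℚ) (m : ℕ) :
    Module.End ℚ (MvPolynomial (ℕ × Fin (N + 1)) ℚ) :=
  ∑ a ∈ Finset.Icc 1 (m - 1), ∑ μ : Fin (N + 1), ∑ ν : Fin (N + 1),
    ((a : ℚ) * ((m - a : ℕ) : ℚ) * η μ ν) •
      ((MvPolynomial.pderiv ((a, μ) : ℕ × Fin (N + 1))).toLinearMap ∘ₗ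
        (MvPolynomial.pderiv ((m - a, ν) : ℕ × Fin (N + 1))).toLinearMap)

namespace Stmt5Aux

open MvPolynomial Finset

/-- The basic building block: `G s x = ∑_{μν} η^{μν} ∂_{(x,μ)} ∂_{(s-x,ν)}`. -/
noncomputable def G (N : ℕ) (η : Fin (N + 1) → Fin (N + 1) → ℚ) (s x : ℕ) :
    Module.End ℚ (MvPolynomial (ℕ × Fin (N + 1)) ℚ) :=
  ∑ μ : Fin (N + 1), ∑ ν : Fin (N + 1),
    η μ ν • ((MvPolynomial.pderiv ((x, μ) : ℕ × Fin (N + 1))).toLinearMap *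
      (MvPolynomial.pderiv ((s - x, ν) : ℕ × Fin (N + 1))).toLinearMap)

lemma lie_sum' {A : Type*} [Ring A] {ι : Type*} (s : Finset ι) (f : ι → A) (x : A) :
    ⁅x, ∑ i ∈ s, f i⁆ = ∑ i ∈ s, ⁅x, f i⁆ := by
  simp [Ring.lie_def, Finset.mul_sum, Finset.sum_mul, Finset.sum_sub_distrib]

lemma lie_mul' {A : Type*} [Ring A] (x y z : A) :
    ⁅x, y * z⁆ = ⁅x, y⁆ * z + y * ⁅x, z⁆ := by
  simp only [Ring.lie_def]; noncomm_ring

lemma lie_smulL {M : Type*} [AddCommGroup M] [Module ℚ M] (c : ℚ)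
    (x y : Module.End ℚ M) : ⁅x, c • y⁆ = c • ⁅x, y⁆ := by
  simp only [Ring.lie_def, mul_smul_comm, smul_mul_assoc, smul_sub]

lemma castsub (a b : ℕ) : ((a - b : ℕ) : ℚ) - ((b - a : ℕ) : ℚ) = (a : ℚ) - (b : ℚ) := by
  rcases le_total a b with h | h
  · rw [Nat.sub_eq_zero_of_le h, Nat.cast_sub h, Nat.cast_zero]; ring
  · rw [Nat.sub_eq_zero_of_le h, Nat.cast_sub h, Nat.cast_zero]; ring

lemma sum_shift {M : Type*} [AddCommMonoid M] (m k : ℕ) (f : ℕ → M) :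
    ∑ x ∈ Finset.Icc (1 + m) (k + m), f x = ∑ a ∈ Finset.Icc 1 k, f (a + m) := by
  rw [← Finset.map_add_right_Icc, Finset.sum_map]
  simp [addRightEmbedding]

lemma extend_shift {M : Type*} [AddCommMonoid M] (k m s : ℕ) (f : ℕ → M)
    (hks : k + m ≤ s)
    (h0 : ∀ x ∈ Finset.Icc 1 s, x ∉ Finset.Icc (1 + m) (k + m) → f x = 0) :
    ∑ a ∈ Finset.Icc 1 k, f (a + m) = ∑ x ∈ Finset.Icc 1 s, f x := by
  rw [← sum_shift]
  exact Finset.sum_subset (fun x hx => by simp only [Finset.mem_Icc] at *; omega) h0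

lemma extend_only {M : Type*} [AddCommMonoid M] (k s : ℕ) (f : ℕ → M) (hks : k ≤ s)
    (h0 : ∀ x ∈ Finset.Icc 1 s, x ∉ Finset.Icc 1 k → f x = 0) :
    ∑ a ∈ Finset.Icc 1 k, f a = ∑ x ∈ Finset.Icc 1 s, f x :=
  Finset.sum_subset (fun x hx => by simp only [Finset.mem_Icc] at *; omega) h0

/-- Key derivation-level bracket: `[X_m, ∂_{(a,μ)}] = -(a+m) ∂_{(a+m,μ)}` for `a ≥ 1`. -/
lemma keybrack (N m a : ℕ) (ha : 1 ≤ a) (μ : Fin (N + 1)) :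
    ⁅XL N m, (MvPolynomial.pderiv ((a, μ) : ℕ × Fin (N + 1))).toLinearMap⁆
      = (-((a + m : ℕ) : ℚ)) •
        ((MvPolynomial.pderiv ((a + m, μ) : ℕ × Fin (N + 1))).toLinearMap :
          Module.End ℚ (MvPolynomial (ℕ × Fin (N + 1)) ℚ)) := by
  have key : ⁅((MvPolynomial.mkDerivation ℚ fun v : ℕ × Fin (N + 1) =>
        if m < v.1 then (v.1 : ℚ) • MvPolynomial.X (v.1 - m, v.2) else 0) :
        Derivation ℚ (MvPolynomial (ℕ × Fin (N + 1)) ℚ) (MvPolynomial (ℕ × Fin (N + 1)) ℚ)),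
        (MvPolynomial.pderiv ((a, μ) : ℕ × Fin (N + 1)) :
          Derivation ℚ (MvPolynomial (ℕ × Fin (N + 1)) ℚ) (MvPolynomial (ℕ × Fin (N + 1)) ℚ))⁆
      = (-((a + m : ℕ) : ℚ)) •
        (MvPolynomial.pderiv ((a + m, μ) : ℕ × Fin (N + 1)) :
          Derivation ℚ (MvPolynomial (ℕ × Fin (N + 1)) ℚ) (MvPolynomial (ℕ × Fin (N + 1)) ℚ)) := by
    apply MvPolynomial.derivation_ext
    intro v
    rw [Derivation.commutator_apply]
    simp only [Derivation.smul_apply]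
    have h1 : ((MvPolynomial.mkDerivation ℚ fun v : ℕ × Fin (N + 1) =>
        if m < v.1 then (v.1 : ℚ) • MvPolynomial.X (v.1 - m, v.2) else 0) :
        Derivation ℚ (MvPolynomial (ℕ × Fin (N + 1)) ℚ) (MvPolynomial (ℕ × Fin (N + 1)) ℚ))
        ((MvPolynomial.pderiv ((a, μ) : ℕ × Fin (N + 1))) (MvPolynomial.X v)) = 0 := by
      rw [pderiv_X, Pi.single_apply]
      split_ifs
      · exact Derivation.map_one_eq_zero _
      · exact map_zero _
    rw [h1, zero_sub, mkDerivation_X]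
    by_cases hv : v = (a + m, μ)
    · subst hv
      have hm' : m < a + m := by omega
      have h2 : (a + m) - m = a := by omega
      rw [if_pos hm', Derivation.map_smul, h2, pderiv_X, pderiv_X,
        Pi.single_eq_same, Pi.single_eq_same]
      simp only [Prod.fst]
      module
    · rw [pderiv_X, Pi.single_apply, if_neg hv, smul_zero, neg_eq_zero]
      split_ifs with hmv
      · rw [Derivation.map_smul, pderiv_X, Pi.single_apply]
        have hne : ((v.1 - m, v.2) : ℕ × Fin (N + 1)) ≠ (a, μ) := by
          intro h
          apply hv
          have h1' : v.1 - m = a := congrArg Prod.fst h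
          have h2' : v.2 = μ := congrArg Prod.snd h
          rw [Prod.ext_iff]
          exact ⟨by omega, h2'⟩
        rw [if_neg hne, smul_zero]
      · exact map_zero _
  have h2 := congrArg (fun D : Derivation ℚ (MvPolynomial (ℕ × Fin (N + 1)) ℚ)
      (MvPolynomial (ℕ × Fin (N + 1)) ℚ) =>
      (D : Module.End ℚ (MvPolynomial (ℕ × Fin (N + 1)) ℚ))) key
  simp only [Derivation.commutator_coe_linear_map, Derivation.coe_smul_linearMap] at h2
  exact h2

/-- `[X_m, Y_n]` expanded in terms of `G`. -/
lemma brackXYG (N : ℕ) (η : Fin (N + 1) → Fin (N + 1) → ℚ) (m n : ℕ) :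
    ⁅XL N m, Yop N η n⁆ = ∑ a ∈ Finset.Icc 1 (n - 1),
      ((-((a : ℚ) * ((n - a : ℕ) : ℚ) * ((a + m : ℕ) : ℚ))) • G N η (m + n) (a + m)
      + (-((a : ℚ) * ((n - a : ℕ) : ℚ) * ((n - a + m : ℕ) : ℚ))) • G N η (m + n) a) := by
  rw [Yop, lie_sum']
  refine Finset.sum_congr rfl fun a ha => ?_
  obtain ⟨ha1, ha2⟩ := Finset.mem_Icc.mp ha
  have hb1 : 1 ≤ n - a := by omega
  rw [lie_sum']
  simp only [G]
  rw [Finset.smul_sum, Finset.smul_sum, ← Finset.sum_add_distrib]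
  refine Finset.sum_congr rfl fun μ _ => ?_
  rw [lie_sum', Finset.smul_sum, Finset.smul_sum, ← Finset.sum_add_distrib]
  refine Finset.sum_congr rfl fun ν _ => ?_
  rw [← Module.End.mul_eq_comp, lie_smulL, lie_mul', keybrack N m a ha1 μ,
    keybrack N m (n - a) hb1 ν]
  have h1 : m + n - (a + m) = n - a := by omega
  have h2 : m + n - a = n - a + m := by omega
  rw [h1, h2, smul_mul_assoc, mul_smul_comm]
  match_scalars <;> push_cast <;> ring

lemma Yop_eq (N : ℕ) (η : Fin (N + 1) → Fin (N + 1) → ℚ) (s : ℕ) :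
    Yop N η s = ∑ x ∈ Finset.Icc 1 (s - 1),
      ((x : ℚ) * ((s - x : ℕ) : ℚ)) • G N η s x := by
  rw [Yop]
  refine Finset.sum_congr rfl fun a _ => ?_
  simp only [G]
  rw [Finset.smul_sum]
  refine Finset.sum_congr rfl fun μ _ => ?_
  rw [Finset.smul_sum]
  refine Finset.sum_congr rfl fun ν _ => ?_
  rw [← Module.End.mul_eq_comp]
  match_scalars
  ring

end Stmt5Aux

open Stmt5Aux Finset in
/-- for all `m, n ≥ 1`,
`[X_m, Y_n] + [Y_m, X_n] = (m − n) Y_{m+n}`. -/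
theorem stmt5 (N : ℕ) (η : Fin (N + 1) → Fin (N + 1) → ℚ)
    (hsym : ∀ μ ν, η μ ν = η ν μ)
    (m n : ℕ) (hm : 1 ≤ m) (hn : 1 ≤ n) :
    ⁅XL N m, Yop N η n⁆ + ⁅Yop N η m, XL N n⁆ = ((m : ℚ) - (n : ℚ)) • Yop N η (m + n) := by
  classical
  have key1 := brackXYG N η m n
  have key2 := brackXYG N η n m
  rw [show n + m = m + n by omega] at key2
  have hskew : ⁅Yop N η m, XL N n⁆ = -⁅XL N n, Yop N η m⁆ := by
    simp only [Ring.lie_def, neg_sub]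
  rw [hskew, key1, key2, ← Finset.sum_neg_distrib, Finset.sum_add_distrib]
  have hneg : ∀ a : ℕ,
      -((-((a : ℚ) * ((m - a : ℕ) : ℚ) * ((a + n : ℕ) : ℚ))) • G N η (m + n) (a + n)
        + (-((a : ℚ) * ((m - a : ℕ) : ℚ) * ((m - a + n : ℕ) : ℚ))) • G N η (m + n) a)
      = ((a : ℚ) * ((m - a : ℕ) : ℚ) * ((a + n : ℕ) : ℚ)) • G N η (m + n) (a + n)
        + ((a : ℚ) * ((m - a : ℕ) : ℚ) * ((m - a + n : ℕ) : ℚ)) • G N η (m + n) a := by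
    intro a
    module
  rw [Finset.sum_congr rfl fun a _ => hneg a, Finset.sum_add_distrib]
  -- sum 1: shifted by m
  have e1 : (∑ a ∈ Icc 1 (n - 1),
      (-((a : ℚ) * ((n - a : ℕ) : ℚ) * ((a + m : ℕ) : ℚ))) • G N η (m + n) (a + m))
      = ∑ x ∈ Icc 1 (m + n - 1),
        (-(((x - m : ℕ) : ℚ) * ((m + n - x : ℕ) : ℚ) * (x : ℚ))) • G N η (m + n) x := by
    rw [Finset.sum_congr rfl (g := fun a : ℕ =>
        (fun x : ℕ => (-(((x - m : ℕ) : ℚ) * ((m + n - x : ℕ) : ℚ) * (x : ℚ))) •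
          G N η (m + n) x) (a + m)) (fun a _ => by
      simp only [Nat.add_sub_cancel, show ∀ b : ℕ, m + n - (b + m) = n - b from
        fun b => by omega])]
    exact extend_shift (n - 1) m (m + n - 1)
      (fun x => (-(((x - m : ℕ) : ℚ) * ((m + n - x : ℕ) : ℚ) * (x : ℚ))) •
        G N η (m + n) x) (by omega) (fun x hx hnx => by
      simp only [Finset.mem_Icc] at hx hnx
      have hx0 : x - m = 0 := by omega
      simp only [hx0, Nat.cast_zero, zero_mul, mul_zero, neg_zero]
      exact zero_smul ℚ _)
  -- sum 2: no shift
  have e2 : (∑ a ∈ Icc 1 (n - 1),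
      (-((a : ℚ) * ((n - a : ℕ) : ℚ) * ((n - a + m : ℕ) : ℚ))) • G N η (m + n) a)
      = ∑ x ∈ Icc 1 (m + n - 1),
        (-((x : ℚ) * ((n - x : ℕ) : ℚ) * ((m + n - x : ℕ) : ℚ))) • G N η (m + n) x := by
    rw [Finset.sum_congr rfl (g := fun a : ℕ =>
        (-((a : ℚ) * ((n - a : ℕ) : ℚ) * ((m + n - a : ℕ) : ℚ))) • G N η (m + n) a)
      (fun a ha => by
        obtain ⟨h1, h2⟩ := Finset.mem_Icc.mp ha
        simp only [show m + n - a = n - a + m from by omega])]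
    refine extend_only (n - 1) (m + n - 1) _ (by omega) (fun x hx hnx => ?_)
    simp only [Finset.mem_Icc] at hx hnx
    have hx0 : n - x = 0 := by omega
    simp only [hx0, Nat.cast_zero, zero_mul, mul_zero, neg_zero]
    exact zero_smul ℚ _
  -- sum 3: shifted by n
  have e3 : (∑ a ∈ Icc 1 (m - 1),
      ((a : ℚ) * ((m - a : ℕ) : ℚ) * ((a + n : ℕ) : ℚ)) • G N η (m + n) (a + n))
      = ∑ x ∈ Icc 1 (m + n - 1),
        ((((x - n : ℕ) : ℚ) * ((m + n - x : ℕ) : ℚ) * (x : ℚ))) • G N η (m + n) x := by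
    rw [Finset.sum_congr rfl (g := fun a : ℕ =>
        (fun x : ℕ => ((((x - n : ℕ) : ℚ) * ((m + n - x : ℕ) : ℚ) * (x : ℚ))) •
          G N η (m + n) x) (a + n)) (fun a _ => by
      simp only [Nat.add_sub_cancel, show ∀ b : ℕ, m + n - (b + n) = m - b from
        fun b => by omega])]
    exact extend_shift (m - 1) n (m + n - 1)
      (fun x => ((((x - n : ℕ) : ℚ) * ((m + n - x : ℕ) : ℚ) * (x : ℚ))) •
        G N η (m + n) x) (by omega) (fun x hx hnx => by
      simp only [Finset.mem_Icc] at hx hnx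
      have hx0 : x - n = 0 := by omega
      simp only [hx0, Nat.cast_zero, zero_mul, mul_zero, neg_zero]
      exact zero_smul ℚ _)
  -- sum 4: no shift
  have e4 : (∑ a ∈ Icc 1 (m - 1),
      ((a : ℚ) * ((m - a : ℕ) : ℚ) * ((m - a + n : ℕ) : ℚ)) • G N η (m + n) a)
      = ∑ x ∈ Icc 1 (m + n - 1),
        (((x : ℚ) * ((m - x : ℕ) : ℚ) * ((m + n - x : ℕ) : ℚ))) • G N η (m + n) x := by
    rw [Finset.sum_congr rfl (g := fun a : ℕ =>
        ((a : ℚ) * ((m - a : ℕ) : ℚ) * ((m + n - a : ℕ) : ℚ)) • G N η (m + n) a)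
      (fun a ha => by
        obtain ⟨h1, h2⟩ := Finset.mem_Icc.mp ha
        simp only [show m + n - a = m - a + n from by omega])]
    refine extend_only (m - 1) (m + n - 1) _ (by omega) (fun x hx hnx => ?_)
    simp only [Finset.mem_Icc] at hx hnx
    have hx0 : m - x = 0 := by omega
    simp only [hx0, Nat.cast_zero, zero_mul, mul_zero, neg_zero]
    exact zero_smul ℚ _
  rw [e1, e2, e3, e4, Yop_eq, Finset.smul_sum,
    ← Finset.sum_add_distrib, ← Finset.sum_add_distrib, ← Finset.sum_add_distrib]
  refine Finset.sum_congr rfl fun x hx => ?_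
  have h1 := castsub x m
  have h2 := castsub x n
  match_scalars
  linear_combination (-(x : ℚ) * ((m + n - x : ℕ) : ℚ)) * h1
    + ((x : ℚ) * ((m + n - x : ℕ) : ℚ)) * h2
end

section
/- Let D be a derivation of a commutative Q-algebra A and suppose x ∈ A satisfies: D^k(x) is given and D is locally nilpotent on x (D^{n+1}(x) = 0 for some n). If 𝔅 is the derivation on Q[t_0, t_1, …, t_n] defined by 𝔅(t_j) = Σ_{l≥1} c_l t_{j−(2l−1)} (with t_j = 0 for j < 0) for constants c_l, then exp(𝔅)(t_n) = Σ_{i=0}^{n} r_i t_{n−i}, where Σ_{i≥0} r_i z^{−i} = exp(Σ_{l≥1} c_l z^{−(2l−1)}). -/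
/-!
On `t_0, …, t_N` the derivation `𝔅` acts as the lower triangular Toeplitz matrix whose symbol
is the polynomial `P = ∑_{l ≤ N} c_l X^{2l-1}`: `𝔅 t_j` is
`∑_i [X^i] P · t_{j-i}`. Symbols multiply under composition, so `𝔅^k t_n = ∑_i [X^i] P^k · t_{n-i}`
and `exp 𝔅` has symbol `∑_k P^k / k!`. Expanding `P^k` as a product of `k` sums gives exactly the
sum over tuples `(l_1, …, l_k)` defining `r_i`; since `X ∣ P` it vanishes for `k > i`, and it
does not depend on the truncation `N ≥ i` because `X^(i+1)` divides the difference of two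
truncations.
-/

/-- `r_i` for constants `c_l`: `r_0 = 1` and for `i ≥ 1`,
`r_i = ∑_{m≥1} (1/m!) ∑_{l_1,…,l_m ≥ 1, ∑_j (2l_j − 1) = i} ∏_j c_{l_j}`,
so that `∑_i r_i z^{-i} = exp(∑_{l≥1} c_l z^{−(2l−1)})`. -/
noncomputable def rcoef (c : ℕ → ℚ) (i : ℕ) : ℚ :=
  if i = 0 then 1 else
    ∑ m ∈ Finset.Icc 1 i, (m.factorial : ℚ)⁻¹ •
      ∑ l ∈ Fintype.piFinset (fun _ : Fin m => Finset.Icc 1 i),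
        (if (∑ j, (2 * l j - 1)) = i then ∏ j, c (l j) else 0)

/-- The lowering derivation `𝔅` of `ℚ[t_0, t_1, …]` defined on generators by
`𝔅(t_j) = ∑_{l≥1, 2l−1 ≤ j} c_l t_{j−(2l−1)}` (with `t_j = 0` for `j < 0`). -/
noncomputable def lowDer (c : ℕ → ℚ) :
    Derivation ℚ (MvPolynomial ℕ ℚ) (MvPolynomial ℕ ℚ) :=
  MvPolynomial.mkDerivation ℚ fun j : ℕ =>
    ∑ l ∈ Finset.Icc 1 j,
      if 2 * l - 1 ≤ j then c l • MvPolynomial.X (j - (2 * l - 1)) else 0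

open Polynomial

section

variable {R : Type*}

theorem Polynomial.coeff_pow_sum_C_mul_X_pow [CommSemiring R] {ι : Type*} [DecidableEq ι]
    (s : Finset ι) (f : ι → R) (e : ι → ℕ) (m i : ℕ) :
    ((∑ l ∈ s, C (f l) * X ^ e l) ^ m).coeff i =
      ∑ l ∈ Fintype.piFinset (fun _ : Fin m => s),
        if ∑ j, e (l j) = i then ∏ j, f (l j) else 0 := by
  rw [← Fin.prod_const, Finset.prod_univ_sum, finsetSum_coeff]
  refine Finset.sum_congr rfl fun l _ => ?_
  simp only [Finset.prod_mul_distrib, ← map_prod, Finset.prod_pow_eq_pow_sum, coeff_C_mul_X_pow,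
    eq_comm]

theorem Polynomial.coeff_pow_eq_of_X_pow_dvd_sub [CommRing R] {p q : R[X]} {i : ℕ}
    (h : X ^ (i + 1) ∣ p - q) (m : ℕ) : (p ^ m).coeff i = (q ^ m).coeff i := by
  have := X_pow_dvd_iff.1 (h.trans (sub_dvd_pow_sub_pow p q m)) i i.lt_succ_self
  rwa [coeff_sub, sub_eq_zero] at this

theorem Polynomial.coeff_pow_eq_zero_of_X_dvd [CommSemiring R] {p : R[X]} (h : X ∣ p)
    {i k : ℕ} (hik : i < k) : (p ^ k).coeff i = 0 :=
  X_pow_dvd_iff.1 (pow_dvd_pow_of_dvd h k) i hik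

theorem Module.End.pow_apply_eq_sum_coeff_pow_smul [CommSemiring R] {M : Type*}
    [AddCommMonoid M] [Module R M] (T : Module.End R M) (x : ℕ → M) (p : R[X]) {N : ℕ}
    (hT : ∀ j ≤ N, T (x j) = ∑ i ∈ Finset.range (j + 1), p.coeff i • x (j - i)) (k : ℕ) :
    ∀ j ≤ N, (T ^ k) (x j) = ∑ i ∈ Finset.range (j + 1), (p ^ k).coeff i • x (j - i) := by
  induction k with
  | zero =>
    intro j _
    simp [coeff_one, Finset.sum_ite_eq']
  | succ k ih =>
    intro j hj
    rw [pow_succ, Module.End.mul_apply, hT j hj, map_sum]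
    have hrow : ∀ a ∈ Finset.range (j + 1), (T ^ k) (p.coeff a • x (j - a)) =
        ∑ m ∈ Finset.Ico a (j + 1), (p.coeff a * (p ^ k).coeff (m - a)) • x (j - m) := by
      intro a ha
      rw [Finset.mem_range] at ha
      rw [map_smul, ih (j - a) (by omega), Finset.smul_sum, Finset.sum_Ico_eq_sum_range,
        show j + 1 - a = j - a + 1 by omega]
      refine Finset.sum_congr rfl fun b _ => ?_
      rw [smul_smul, Nat.add_sub_cancel_left, Nat.sub_sub]
    rw [Finset.sum_congr rfl hrow, Finset.range_eq_Ico, Finset.sum_Ico_Ico_comm]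
    refine Finset.sum_congr rfl fun m _ => ?_
    rw [pow_succ', coeff_mul, Finset.Nat.sum_antidiagonal_eq_sum_range_succ
      (fun a b => p.coeff a * (p ^ k).coeff b), Finset.sum_smul, Finset.range_eq_Ico]

end

/-- `∑_{l ≥ 1} c_l z^{-(2l-1)}` truncated at `l = N`, with `X` standing for `z⁻¹`. -/
noncomputable def lowDerPoly (c : ℕ → ℚ) (N : ℕ) : ℚ[X] :=
  ∑ l ∈ Finset.Icc 1 N, C (c l) * X ^ (2 * l - 1)

theorem X_dvd_lowDerPoly (c : ℕ → ℚ) (N : ℕ) : X ∣ lowDerPoly c N :=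
  Finset.dvd_sum fun l hl =>
    dvd_mul_of_dvd_right (dvd_pow_self X (by rw [Finset.mem_Icc] at hl; omega)) _

theorem X_pow_dvd_lowDerPoly_sub (c : ℕ → ℚ) {i N : ℕ} (h : i ≤ N) :
    X ^ (i + 1) ∣ lowDerPoly c N - lowDerPoly c i := by
  rw [lowDerPoly, lowDerPoly, ← Finset.sum_sdiff (Finset.Icc_subset_Icc_right h),
    add_sub_cancel_right]
  refine Finset.dvd_sum fun l hl => dvd_mul_of_dvd_right (pow_dvd_pow X ?_) _
  simp only [Finset.mem_sdiff, Finset.mem_Icc] at hl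
  omega

theorem coeff_lowDerPoly (c : ℕ → ℚ) (N i : ℕ) :
    (lowDerPoly c N).coeff i = ∑ l ∈ Finset.Icc 1 N, if i = 2 * l - 1 then c l else 0 := by
  simp only [lowDerPoly, finsetSum_coeff, coeff_C_mul_X_pow]

theorem lowDer_X_eq_sum_coeff_smul (c : ℕ → ℚ) {j N : ℕ} (h : j ≤ N) :
    lowDer c (MvPolynomial.X j) =
      ∑ i ∈ Finset.range (j + 1), (lowDerPoly c N).coeff i • MvPolynomial.X (j - i) := by
  simp only [coeff_lowDerPoly, Finset.sum_smul, ite_smul, zero_smul]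
  rw [Finset.sum_comm]
  simp only [Finset.sum_ite_eq', Finset.mem_range, Nat.lt_succ_iff]
  rw [lowDer, MvPolynomial.mkDerivation_X]
  refine Finset.sum_subset (Finset.Icc_subset_Icc_right h) fun l hl hlj => ?_
  simp only [Finset.mem_Icc] at hl hlj
  rw [if_neg (by omega)]

theorem rcoef_eq_sum_coeff_lowDerPoly_pow (c : ℕ → ℚ) {i N : ℕ} (h : i ≤ N) :
    rcoef c i =
      ∑ k ∈ Finset.range (N + 1), (k.factorial : ℚ)⁻¹ * (lowDerPoly c N ^ k).coeff i := by
  have hvanish : ∀ k ∈ Finset.range (N + 1), k ∉ Finset.range (i + 1) →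
      (k.factorial : ℚ)⁻¹ * (lowDerPoly c N ^ k).coeff i = 0 := fun k _ hk => by
    rw [coeff_pow_eq_zero_of_X_dvd (X_dvd_lowDerPoly c N) (by simpa using hk), mul_zero]
  rw [← Finset.sum_subset (Finset.range_subset_range.2 (by omega)) hvanish]
  simp_rw [coeff_pow_eq_of_X_pow_dvd_sub (X_pow_dvd_lowDerPoly_sub c h)]
  rw [rcoef, Finset.range_eq_Ico, Finset.sum_eq_sum_Ico_succ_bot (by omega : 0 < i + 1)]
  split_ifs with hi
  · subst hi
    simp
  · rw [pow_zero, coeff_one, if_neg hi, mul_zero, zero_add, zero_add,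
      Finset.Ico_add_one_right_eq_Icc]
    refine Finset.sum_congr rfl fun m _ => ?_
    rw [smul_eq_mul, lowDerPoly, coeff_pow_sum_C_mul_X_pow]

/-- `exp(𝔅)(t_n) = ∑_{i=0}^{n} r_i t_{n−i}`; since `𝔅` strictly lowers indices,
only the terms `k ≤ n` of the Taylor expansion of `exp` contribute. -/
theorem stmt9 (c : ℕ → ℚ) (n : ℕ) :
    ∑ k ∈ Finset.range (n + 1),
      (k.factorial : ℚ)⁻¹ • ((lowDer c).toLinearMap ^ k) (MvPolynomial.X n) =
    ∑ i ∈ Finset.range (n + 1),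
      MvPolynomial.C (rcoef c i) * MvPolynomial.X (n - i) := by
  have hpow := Module.End.pow_apply_eq_sum_coeff_pow_smul (lowDer c).toLinearMap MvPolynomial.X
    (lowDerPoly c n) (fun j hj => lowDer_X_eq_sum_coeff_smul c hj)
  simp_rw [hpow _ n le_rfl, Finset.smul_sum, smul_smul]
  rw [Finset.sum_comm]
  refine Finset.sum_congr rfl fun i hi => ?_
  rw [← Finset.sum_smul, rcoef_eq_sum_coeff_lowDerPoly_pow c (Finset.mem_range_succ_iff.1 hi),
    MvPolynomial.smul_eq_C_mul]
end

section
/- With 𝔅_{t,ω} and P_{t,ω} as above, for all n and α: exp(𝔅_{t,ω}) exp(P_{t,ω}) · t_n^0 = Σ_{i=0}^{n} R_i(ω) t_{n−i}^0 − R_{n−1}(ω) for n ≥ 2, and exp(𝔅_{t,ω}) exp(P_{t,ω}) · t_n^α = Σ_{i=0}^{n} R_i(ω) t_{n−i}^α otherwise. -/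
/-- The coefficient ring `ℚ[ω_1, ω_2, …]` (the variable `ω_0` plays no role). -/
abbrev OmegaRing : Type := MvPolynomial ℕ ℚ

/-- `R_i(ω)`: `R_0 = 1` and for `i ≥ 1`,
`R_i(w) = ∑_{n=1}^{i} (1/n!) ∑_{l_1,…,l_n ≥ 1, ∑ 2 l_j = i+n} ∏_j (−w_{l_j})`. -/
noncomputable def Rcoef {A : Type*} [CommRing A] [Algebra ℚ A] (w : ℕ → A) (i : ℕ) : A :=
  if i = 0 then 1 else
    ∑ n ∈ Finset.Icc 1 i, (n.factorial : ℚ)⁻¹ •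
      ∑ l ∈ Fintype.piFinset (fun _ : Fin n => Finset.Icc 1 i),
        (if (∑ j, 2 * l j) = i + n then ∏ j, (-(w (l j))) else 0)

/-- The specialization `w_l = ω_l`. -/
noncomputable def Rω (i : ℕ) : OmegaRing :=
  Rcoef (fun l => (MvPolynomial.X l : OmegaRing)) i

noncomputable def Scoef : ℕ → ℕ → OmegaRing
  | 0, i => if i = 0 then 1 else 0
  | (k+1), i => ∑ m ∈ Finset.Icc 1 i,
      if 2 * m - 1 ≤ i then (-(MvPolynomial.X m : OmegaRing)) * Scoef k (i - (2 * m - 1)) else 0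

noncomputable def Tcoef (k i b : ℕ) : OmegaRing :=
  ∑ l ∈ Fintype.piFinset (fun _ : Fin k => Finset.Icc 1 b),
    if (∑ j, 2 * l j) = i + k then ∏ j, (-(MvPolynomial.X (l j) : OmegaRing)) else 0

lemma Scoef_eq_zero : ∀ k i, i < k → Scoef k i = 0 := by
  intro k
  induction k with
  | zero => intro i h; omega
  | succ k ih =>
    intro i h
    rw [Scoef]
    refine Finset.sum_eq_zero fun m hm => ?_
    simp only [Finset.mem_Icc] at hm
    split_ifs with hc
    · rw [ih _ (by omega), mul_zero]
    · rfl

lemma sum_piFinset_cons {M : Type*} [AddCommMonoid M] {k : ℕ} (s : Finset ℕ)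
    (f : (Fin (k+1) → ℕ) → M) :
    ∑ l ∈ Fintype.piFinset (fun _ : Fin (k+1) => s), f l
      = ∑ m ∈ s, ∑ l ∈ Fintype.piFinset (fun _ : Fin k => s), f (Fin.cons m l) := by
  rw [Finset.sum_sigma' s (fun _ => Fintype.piFinset (fun _ : Fin k => s))
    (fun m l => f (Fin.cons m l))]
  refine Finset.sum_nbij' (fun l => ⟨l 0, Fin.tail l⟩) (fun p => Fin.cons p.1 p.2)
    ?_ ?_ ?_ ?_ ?_
  · intro l hl
    simp only [Fintype.mem_piFinset] at hl
    simp only [Finset.mem_sigma, Fintype.mem_piFinset]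
    exact ⟨hl 0, fun j => hl _⟩
  · intro p hp
    simp only [Finset.mem_sigma, Fintype.mem_piFinset] at hp
    simp only [Fintype.mem_piFinset]
    intro j
    refine Fin.cases ?_ ?_ j
    · simpa using hp.1
    · intro j'; simpa using hp.2 j'
  · intro l _; exact Fin.cons_self_tail l
  · intro p _
    simp only [Fin.cons_zero, Fin.tail_cons]
  · intro l _; rw [Fin.cons_self_tail]

lemma Tcoef_succ (k i b : ℕ) :
    Tcoef (k+1) i b = ∑ m ∈ Finset.Icc 1 b,
      (if 2 * m - 1 ≤ i then (-(MvPolynomial.X m : OmegaRing)) * Tcoef k (i - (2*m-1)) b else 0) := by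
  rw [Tcoef, sum_piFinset_cons]
  refine Finset.sum_congr rfl fun m hm => ?_
  simp only [Finset.mem_Icc] at hm
  have hsum : ∀ l : Fin k → ℕ, (∑ j : Fin (k+1), 2 * (Fin.cons m l) j) = 2*m + ∑ j, 2 * l j := by
    intro l
    rw [Fin.sum_univ_succ]
    simp
  split_ifs with hc
  · rw [Tcoef, Finset.mul_sum]
    refine Finset.sum_congr rfl fun l _ => ?_
    rw [hsum l]
    have hiff : (2*m + ∑ j, 2 * l j = i + (k+1)) ↔ ((∑ j, 2 * l j) = i - (2*m-1) + k) := by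
      omega
    simp only [hiff, mul_ite, mul_zero]
    rcases eq_or_ne (∑ j, 2 * l j) (i - (2*m-1) + k) with h | h
    · rw [if_pos h, if_pos h, Fin.prod_univ_succ]
      simp
    · rw [if_neg h, if_neg h]
  · refine (Finset.sum_eq_zero fun l hl => ?_)
    simp only [Fintype.mem_piFinset, Finset.mem_Icc] at hl
    rw [hsum l, if_neg ?_]
    have h2k : 2 * k ≤ ∑ j, 2 * l j := by
      calc 2 * k = ∑ _j : Fin k, 2 := by simp [mul_comm]
      _ ≤ ∑ j, 2 * l j := Finset.sum_le_sum fun j _ => by have := (hl j).1; omega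
    omega

lemma Scoef_eq_Tcoef : ∀ k i b, i ≤ b → Scoef k i = Tcoef k i b := by
  intro k
  induction k with
  | zero =>
    intro i b _
    simp [Scoef, Tcoef, Fintype.piFinset_of_isEmpty, Finset.univ_unique, eq_comm]
  | succ k ih =>
    intro i b hib
    rw [Scoef, Tcoef_succ]
    rw [← Finset.sum_subset (Finset.Icc_subset_Icc_right hib) (fun m hm hmn => ?_)]
    · refine Finset.sum_congr rfl fun m hm => ?_
      split_ifs with hc
      · rw [ih (i - (2*m-1)) b (by omega)]
      · rfl
    · simp only [Finset.mem_Icc] at hm hmn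
      rw [if_neg (by omega)]

lemma Rω_eq (i : ℕ) : Rω i = ∑ k ∈ Finset.range (i+1), (k.factorial : ℚ)⁻¹ • Scoef k i := by
  rcases Nat.eq_zero_or_pos i with rfl | hi
  · simp [Rω, Rcoef, Scoef]
  · rw [Rω, Rcoef, if_neg (by omega), Finset.sum_range_succ',
      show ((Nat.factorial 0 : ℚ)⁻¹ • Scoef 0 i) = 0 by simp [Scoef, hi.ne'], add_zero]
    refine Finset.sum_nbij' (fun n => n - 1) (fun k => k + 1) ?_ ?_ ?_ ?_ ?_
    · intro a ha; simp only [Finset.mem_Icc] at ha; simp only [Finset.mem_range]; omega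
    · intro a ha; simp only [Finset.mem_range] at ha; simp only [Finset.mem_Icc]; omega
    · intro a ha; simp only [Finset.mem_Icc] at ha; omega
    · intro a _; omega
    · intro a ha
      simp only [Finset.mem_Icc] at ha
      rw [Nat.sub_add_cancel ha.1, Scoef_eq_Tcoef a i i le_rfl]
      rfl

/-- The derivation `𝔅_{t,ω} = −∑_{l≥1} ω_l ∑_{i,α} t_i^α ∂/∂t_{i+2l−1}^α`. -/
noncomputable def Bfrak (N : ℕ) :
    Derivation OmegaRing (MvPolynomial (ℕ × Fin (N + 1)) OmegaRing)
      (MvPolynomial (ℕ × Fin (N + 1)) OmegaRing) :=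
  MvPolynomial.mkDerivation OmegaRing fun v : ℕ × Fin (N + 1) =>
    ∑ l ∈ Finset.Icc 1 v.1,
      if 2 * l - 1 ≤ v.1 then
        (-(MvPolynomial.X l : OmegaRing)) • MvPolynomial.X (v.1 - (2 * l - 1), v.2)
      else 0

lemma Bfrak_apply_X (N n : ℕ) (α : Fin (N + 1)) :
    (Bfrak N).toLinearMap (MvPolynomial.X (n, α)) =
      ∑ m ∈ Finset.Icc 1 n, if 2 * m - 1 ≤ n then
        (-(MvPolynomial.X m : OmegaRing)) • MvPolynomial.X (n - (2 * m - 1), α) else 0 := by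
  show Bfrak N (MvPolynomial.X (n, α)) = _
  rw [Bfrak, MvPolynomial.mkDerivation_X]

lemma Bpow (N k n : ℕ) (α : Fin (N + 1)) :
    ((Bfrak N).toLinearMap ^ k) (MvPolynomial.X (n, α)) =
      ∑ i ∈ Finset.range (n+1), Scoef k i • MvPolynomial.X (n - i, α) := by
  induction k with
  | zero =>
    rw [pow_zero, Module.End.one_apply, Finset.sum_eq_single 0]
    · simp [Scoef]
    · intro i _ hne; simp [Scoef, hne]
    · intro h; exact absurd (Finset.mem_range.2 (by omega)) h
  | succ k ih =>
    rw [pow_succ', Module.End.mul_apply, ih, map_sum]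
    simp only [map_smul, Bfrak_apply_X]
    simp only [Finset.smul_sum, smul_ite, smul_zero, smul_smul]
    have hR : ∀ i, Scoef (k+1) i • (MvPolynomial.X (n-i,α) : MvPolynomial (ℕ × Fin (N+1)) OmegaRing)
        = ∑ m ∈ Finset.Icc 1 i, (if 2*m-1 ≤ i then
            ((-(MvPolynomial.X m : OmegaRing)) * Scoef k (i-(2*m-1))) • MvPolynomial.X (n-i,α)
          else 0) := by
      intro i
      rw [Scoef, Finset.sum_smul]
      simp only [ite_smul, zero_smul]
    simp only [hR]
    simp only [← Finset.sum_filter]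
    rw [Finset.sum_sigma' (Finset.range (n+1)), Finset.sum_sigma' (Finset.range (n+1))]
    refine Finset.sum_nbij' (fun p => ⟨p.1 + (2*p.2-1), p.2⟩) (fun p => ⟨p.1 - (2*p.2-1), p.2⟩)
      ?_ ?_ ?_ ?_ ?_
    · rintro ⟨i, m⟩ ha
      simp only [Finset.mem_sigma, Finset.mem_filter, Finset.mem_Icc, Finset.mem_range] at ha ⊢
      omega
    · rintro ⟨i, m⟩ ha
      simp only [Finset.mem_sigma, Finset.mem_filter, Finset.mem_Icc, Finset.mem_range] at ha ⊢
      omega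
    · rintro ⟨i, m⟩ ha
      simp only [Finset.mem_sigma, Finset.mem_filter, Finset.mem_Icc, Finset.mem_range] at ha
      dsimp only
      have e : i + (2*m-1) - (2*m-1) = i := by omega
      rw [e]
    · rintro ⟨i, m⟩ ha
      simp only [Finset.mem_sigma, Finset.mem_filter, Finset.mem_Icc, Finset.mem_range] at ha
      dsimp only
      have e : i - (2*m-1) + (2*m-1) = i := by omega
      rw [e]
    · rintro ⟨i, m⟩ ha
      simp only [Finset.mem_sigma, Finset.mem_filter, Finset.mem_Icc, Finset.mem_range] at ha
      dsimp only
      have e1 : i + (2*m-1) - (2*m-1) = i := by omega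
      have e2 : n - i - (2*m-1) = n - (i + (2*m-1)) := by omega
      rw [e1, e2, mul_comm]

lemma expB (N n : ℕ) (α : Fin (N + 1)) :
    ∑ k ∈ Finset.range (n+1), (k.factorial : ℚ)⁻¹ •
        ((Bfrak N).toLinearMap ^ k) (MvPolynomial.X (n, α))
      = ∑ i ∈ Finset.range (n+1), MvPolynomial.C (Rω i) * MvPolynomial.X (n - i, α) := by
  simp only [Bpow, Finset.smul_sum]
  rw [Finset.sum_comm]
  refine Finset.sum_congr rfl fun i hi => ?_
  simp only [← smul_assoc, ← Finset.sum_smul]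
  rw [show (∑ k ∈ Finset.range (n+1), (k.factorial : ℚ)⁻¹ • Scoef k i) = Rω i from ?_]
  · rw [MvPolynomial.smul_eq_C_mul]
  · rw [Rω_eq]
    refine (Finset.sum_subset (Finset.range_subset_range.2 (by simp only [Finset.mem_range] at hi; omega))
      fun k hk hki => ?_).symm
    simp only [Finset.mem_range, not_lt] at hki
    rw [Scoef_eq_zero k i (by omega), smul_zero]

lemma Bpow_C (N k : ℕ) (a : OmegaRing) (hk : k ≠ 0) :
    ((Bfrak N).toLinearMap ^ k) (MvPolynomial.C a) = 0 := by
  obtain ⟨k', rfl⟩ : ∃ k', k = k' + 1 := ⟨k - 1, by omega⟩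
  rw [pow_succ, Module.End.mul_apply,
    show (Bfrak N).toLinearMap (MvPolynomial.C a) = 0 from ?_, map_zero]
  rw [← MvPolynomial.algebraMap_eq]
  exact Derivation.map_algebraMap _ _

lemma expConst (N n : ℕ) (a : OmegaRing) :
    ∑ k ∈ Finset.range (n+1), (k.factorial : ℚ)⁻¹ •
        ((Bfrak N).toLinearMap ^ k) (MvPolynomial.C a) = MvPolynomial.C a := by
  rw [Finset.sum_eq_single 0]
  · simp
  · intro k _ hk; rw [Bpow_C _ _ _ hk, smul_zero]
  · intro h; exact absurd (Finset.mem_range.2 (by omega)) h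

/-- The first-order operator `P_{t,ω} = −∑_{i≥1} R_i(ω) ∂/∂t_{1+i}^0`. -/
noncomputable def Pop (N : ℕ) :
    Derivation OmegaRing (MvPolynomial (ℕ × Fin (N + 1)) OmegaRing)
      (MvPolynomial (ℕ × Fin (N + 1)) OmegaRing) :=
  MvPolynomial.mkDerivation OmegaRing fun v : ℕ × Fin (N + 1) =>
    if v.2 = 0 ∧ 2 ≤ v.1 then -(MvPolynomial.C (Rω (v.1 - 1))) else 0

lemma Pop_apply_X (N n : ℕ) (α : Fin (N + 1)) :
    (Pop N).toLinearMap (MvPolynomial.X (n, α)) =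
      if α = 0 ∧ 2 ≤ n then -(MvPolynomial.C (Rω (n - 1))) else 0 := by
  show Pop N (MvPolynomial.X (n, α)) = _
  rw [Pop, MvPolynomial.mkDerivation_X]

lemma expP (N n : ℕ) (α : Fin (N + 1)) :
    ∑ j ∈ Finset.range (n + 2), (j.factorial : ℚ)⁻¹ •
        ((Pop N).toLinearMap ^ j) (MvPolynomial.X (n, α))
      = MvPolynomial.X (n, α) +
          (if α = 0 ∧ 2 ≤ n then -(MvPolynomial.C (Rω (n - 1))) else 0) := by
  have hP0 : (Pop N).toLinearMap
      (if α = 0 ∧ 2 ≤ n then -(MvPolynomial.C (Rω (n - 1))) else 0) = 0 := by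
    split_ifs
    · rw [map_neg, ← MvPolynomial.algebraMap_eq,
        show (Pop N).toLinearMap ((algebraMap OmegaRing
            (MvPolynomial (ℕ × Fin (N+1)) OmegaRing)) (Rω (n - 1))) = 0 from
          Derivation.map_algebraMap _ _, neg_zero]
    · exact map_zero _
  have h2 : ∀ j, 2 ≤ j → ((Pop N).toLinearMap ^ j) (MvPolynomial.X (n, α)) = 0 := by
    intro j hj
    obtain ⟨j', rfl⟩ : ∃ j', j = j' + 2 := ⟨j - 2, by omega⟩
    rw [pow_succ, Module.End.mul_apply, pow_succ, Module.End.mul_apply, Pop_apply_X, hP0, map_zero]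
  have hsplit : ∀ j ∈ Finset.range (n+2),
      (j.factorial : ℚ)⁻¹ • ((Pop N).toLinearMap ^ j) (MvPolynomial.X (n, α))
        = (if j = 0 then MvPolynomial.X (n, α) else 0) +
          (if j = 1 then (if α = 0 ∧ 2 ≤ n then -(MvPolynomial.C (Rω (n - 1))) else 0) else 0) := by
    intro j _
    rcases j with _ | j
    · simp
    rcases j with _ | j
    · simp [pow_one, Pop_apply_X]
    · rw [h2 (j+2) (by omega), smul_zero, if_neg (by omega), if_neg (by omega), add_zero]
  rw [Finset.sum_congr rfl hsplit, Finset.sum_add_distrib, Finset.sum_ite_eq' (Finset.range (n+2)),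
    Finset.sum_ite_eq' (Finset.range (n+2)), if_pos (Finset.mem_range.2 (by omega)),
    if_pos (Finset.mem_range.2 (by omega))]

/-- `exp(𝔅_{t,ω}) exp(P_{t,ω}) · t_n^0 = ∑_{i=0}^{n} R_i(ω) t_{n−i}^0 − R_{n−1}(ω)`
for `n ≥ 2`, and `exp(𝔅_{t,ω}) exp(P_{t,ω}) · t_n^α = ∑_{i=0}^{n} R_i(ω) t_{n−i}^α` otherwise.
The exponentials are computed via their (terminating) Taylor expansions. -/
theorem stmt11 (N n : ℕ) (α : Fin (N + 1)) :
    ∑ k ∈ Finset.range (n + 1), (k.factorial : ℚ)⁻¹ •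
      ((Bfrak N).toLinearMap ^ k)
        (∑ j ∈ Finset.range (n + 2), (j.factorial : ℚ)⁻¹ •
          ((Pop N).toLinearMap ^ j) (MvPolynomial.X (n, α))) =
    if α = 0 ∧ 2 ≤ n then
      (∑ i ∈ Finset.range (n + 1), MvPolynomial.C (Rω i) * MvPolynomial.X (n - i, α)) -
        MvPolynomial.C (Rω (n - 1))
    else
      ∑ i ∈ Finset.range (n + 1), MvPolynomial.C (Rω i) * MvPolynomial.X (n - i, α) := by
  rw [expP]
  simp only [map_add, smul_add, Finset.sum_add_distrib]
  by_cases h : α = 0 ∧ 2 ≤ n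
  · simp only [if_pos h]
    rw [show -(MvPolynomial.C (Rω (n-1))) = MvPolynomial.C (-(Rω (n-1))) from (map_neg _ _).symm,
      expB, expConst, map_neg, sub_eq_add_neg]
  · simp only [if_neg h]
    simp only [map_zero, smul_zero, Finset.sum_const_zero, add_zero]
    exact expB N n α
end

section
/- Let φ_k(u,z) be defined recursively by φ_0(u,z) = z and φ_{k+1}(u,z) = (u+z)² z ∂φ_k/∂z. Then φ_k(u,z) is a polynomial of the form Σ_{j=1}^{2k+1} c_j^{(k)} u^{2k+1−j} z^j with rational constants c_j^{(k)}, and the leading coefficient is c_{2k+1}^{(k)} = (2k−1)!! (with the convention (−1)!! = 1). -/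
open Polynomial

/-- The derivation `D = (u+z)² z d/dz` on `ℚ[u][z]`, where `u = C X` and `z = X`. -/
noncomputable def Dop (p : Polynomial (Polynomial ℚ)) : Polynomial (Polynomial ℚ) :=
  (C (X : Polynomial ℚ) + X) ^ 2 * X * derivative p

/-- `φ_k(u,z)`, defined by `φ_0 = z` and `φ_{k+1} = (u+z)² z ∂φ_k/∂z`, i.e. `φ_k = D^k(z)`. -/
noncomputable def phi (k : ℕ) : Polynomial (Polynomial ℚ) :=
  Dop^[k] X

/-! `φ_k` is homogeneous of degree `2k+1` because `D` raises the total degree by exactly two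
(`(u+z)²` adds two, `z ∂/∂z` preserves it), and it has no `z⁰` term since `D` ends in a
factor `z`.
Setting `u = 0` turns `D` into `z³ d/dz`, which sends `c z^(2k+1)` to `(2k+1) c z^(2k+3)`;
this produces the leading coefficient `(2k-1)‼`. -/

section Homogeneous

variable {R : Type*} [CommSemiring R]

/-- Homogeneity of total degree `n` in both variables of `R[u][z]`. -/
def IsHomogeneous₂ (n : ℕ) (p : R[X][X]) : Prop :=
  ∀ j m, (p.coeff j).coeff m ≠ 0 → j + m = n

theorem isHomogeneous₂_X : IsHomogeneous₂ 1 (X : R[X][X]) := by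
  intro j m h
  rcases eq_or_ne j 1 with rfl | hj
  · by_contra hm
    simp_all [coeff_one]
  · simp [coeff_X, Ne.symm hj] at h

theorem isHomogeneous₂_C_X : IsHomogeneous₂ 1 (C X : R[X][X]) := by
  intro j m h
  rcases eq_or_ne j 0 with rfl | hj
  · by_contra hm
    simp_all [coeff_X]
  · simp [coeff_C, hj] at h

theorem IsHomogeneous₂.add {n : ℕ} {p q : R[X][X]} (hp : IsHomogeneous₂ n p)
    (hq : IsHomogeneous₂ n q) : IsHomogeneous₂ n (p + q) := by
  intro j m h
  by_contra hjm
  rw [coeff_add, coeff_add, not_imp_comm.1 (hp j m) hjm, not_imp_comm.1 (hq j m) hjm,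
    add_zero] at h
  exact h rfl

theorem IsHomogeneous₂.mul {a b : ℕ} {p q : R[X][X]} (hp : IsHomogeneous₂ a p)
    (hq : IsHomogeneous₂ b q) : IsHomogeneous₂ (a + b) (p * q) := by
  intro j m h
  by_contra hjm
  refine h ?_
  rw [coeff_mul, finsetSum_coeff]
  refine Finset.sum_eq_zero fun x hx => ?_
  rw [coeff_mul]
  refine Finset.sum_eq_zero fun y hy => ?_
  rw [Finset.HasAntidiagonal.mem_antidiagonal] at hx hy
  by_contra hxy
  have hpxy := hp _ _ (left_ne_zero_of_mul hxy)
  have hqxy := hq _ _ (right_ne_zero_of_mul hxy)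
  omega

theorem IsHomogeneous₂.pow {a : ℕ} {p : R[X][X]} (hp : IsHomogeneous₂ a p) (k : ℕ) :
    IsHomogeneous₂ (a * k) (p ^ k) := by
  induction k with
  | zero =>
    intro j m h
    by_contra hjm
    rcases Nat.eq_zero_or_pos j with rfl | hj
    · simp_all [coeff_one]
    · simp [coeff_one, hj.ne'] at h
  | succ k ih => simpa [pow_succ, mul_add] using ih.mul hp

theorem IsHomogeneous₂.derivative {n : ℕ} {p : R[X][X]} (hp : IsHomogeneous₂ (n + 1) p) :
    IsHomogeneous₂ n (derivative p) := by
  intro j m h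
  rw [coeff_derivative, ← C_eq_natCast, ← C_1, ← C_add, coeff_mul_C] at h
  have := hp _ _ (left_ne_zero_of_mul h)
  omega

theorem IsHomogeneous₂.coeff_eq {n : ℕ} {p : R[X][X]} (hp : IsHomogeneous₂ n p) {j : ℕ}
    (hj : j ≤ n) :
    p.coeff j = C ((p.coeff j).coeff (n - j)) * X ^ (n - j) := by
  ext m
  rw [coeff_C_mul_X_pow]
  split_ifs with hm
  · rw [hm]
  · exact not_imp_comm.1 (hp j m) (by omega)

theorem IsHomogeneous₂.coeff_eq_zero {n : ℕ} {p : R[X][X]} (hp : IsHomogeneous₂ n p) {j : ℕ}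
    (hj : n < j) : p.coeff j = 0 := by
  ext m
  exact not_imp_comm.1 (hp j m) (by omega)

theorem IsHomogeneous₂.eq_sum {n : ℕ} {p : R[X][X]} (hp : IsHomogeneous₂ n p)
    (h0 : p.coeff 0 = 0) :
    p = ∑ j ∈ Finset.Icc 1 n, C (C ((p.coeff j).coeff (n - j)) * X ^ (n - j)) * X ^ j := by
  ext1 j
  simp only [finsetSum_coeff, coeff_C_mul_X_pow, Finset.sum_ite_eq, Finset.mem_Icc]
  split_ifs with hj
  · exact hp.coeff_eq hj.2
  · rcases Nat.eq_zero_or_pos j with rfl | hj0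
    · exact h0
    · exact hp.coeff_eq_zero (by omega)

end Homogeneous

theorem phi_succ (k : ℕ) : phi (k + 1) = Dop (phi k) :=
  Function.iterate_succ_apply' _ _ _

theorem isHomogeneous₂_Dop {n : ℕ} {p : ℚ[X][X]} (hp : IsHomogeneous₂ (n + 1) p) :
    IsHomogeneous₂ (n + 3) (Dop p) := by
  have h := (((isHomogeneous₂_C_X.add isHomogeneous₂_X).pow 2).mul isHomogeneous₂_X).mul
    hp.derivative
  rwa [show 1 * 2 + 1 + n = n + 3 by omega] at h

theorem isHomogeneous₂_phi (k : ℕ) : IsHomogeneous₂ (2 * k + 1) (phi k) := by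
  induction k with
  | zero => exact isHomogeneous₂_X
  | succ k ih =>
    rw [phi_succ, show 2 * (k + 1) + 1 = 2 * k + 3 by omega]
    exact isHomogeneous₂_Dop ih

theorem coeff_Dop_zero (p : ℚ[X][X]) : (Dop p).coeff 0 = 0 := by
  simp [Dop, mul_coeff_zero]

theorem coeff_phi_zero (k : ℕ) : (phi k).coeff 0 = 0 := by
  cases k with
  | zero => simp [phi]
  | succ k => rw [phi_succ, coeff_Dop_zero]

theorem map_evalRingHom_zero_Dop (p : ℚ[X][X]) :
    (Dop p).map (evalRingHom 0) = X ^ 3 * derivative (p.map (evalRingHom 0)) := by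
  simp [Dop, derivative_map, ← pow_succ]

theorem map_evalRingHom_zero_phi (k : ℕ) :
    (phi k).map (evalRingHom 0) = C ((2 * k - 1).doubleFactorial : ℚ) * X ^ (2 * k + 1) := by
  induction k with
  | zero => simp [phi]
  | succ k ih =>
    rw [phi_succ, map_evalRingHom_zero_Dop, ih, derivative_C_mul_X_pow,
      show 2 * (k + 1) - 1 = 2 * k + 1 by omega, Nat.doubleFactorial_add_one,
      Nat.cast_mul, C_mul, C_mul, Nat.add_sub_cancel]
    ring

theorem coeff_coeff_phi_two_mul_add_one (k : ℕ) :
    ((phi k).coeff (2 * k + 1)).coeff 0 = (2 * k - 1).doubleFactorial := by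
  simpa [coeff_zero_eq_eval_zero] using
    congrArg (coeff · (2 * k + 1)) (map_evalRingHom_zero_phi k)

/-- `φ_k(u,z) = ∑_{j=1}^{2k+1} c_j^{(k)} u^{2k+1−j} z^j` for rational constants
`c_j^{(k)}`, with leading coefficient `c_{2k+1}^{(k)} = (2k−1)‼` (and `(−1)‼ = 1`, which
is the value of `(2·0−1)‼` under truncated subtraction). -/
theorem stmt13 (k : ℕ) :
    ∃ c : ℕ → ℚ,
      (phi k = ∑ j ∈ Finset.Icc 1 (2 * k + 1),
          C (C (c j) * (X : Polynomial ℚ) ^ (2 * k + 1 - j)) * X ^ j) ∧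
      c (2 * k + 1) = (Nat.doubleFactorial (2 * k - 1) : ℚ) := by
  refine ⟨fun j => ((phi k).coeff j).coeff (2 * k + 1 - j),
    (isHomogeneous₂_phi k).eq_sum (coeff_phi_zero k), ?_⟩
  simpa using coeff_coeff_phi_two_mul_add_one k
end
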